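/- Fix δ ∈ (0,1). There exists ε₀ > 0 such that for every ε ∈ (0, ε₀) there is N₀ with the following property for all integers N ≥ N₀: write ρ := 1 − N^{−δ}, and let K_ε ∈ ℕ satisfy ( ρ(1−ρ) )^{1/2^{K_ε}} ≤ ε ≤ ( ρ(1−ρ) )^{1/2^{K_ε+1}}. Then for every k with 0 ≤ k ≤ K_ε one has p_k^{(N,δ)} ≥ ( √ρ · (1 − 3ε/√ρ) )^{𝔰(k)} · ( ρ(1−ρ) )^{1/2^k}, where 𝔰(k) := Σ_{j=0}^{k−1} 2^{−j} = 2(1 − 2^{−k}) (with 𝔰(0) = 0). -/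

import Mathlib

open Filter Finset

namespace MullerRatchet17

/-- Auxiliary recursion computing the pair `(p_k, Σ_{ℓ≤k} p_ℓ)` of the equilibrium
type-frequency weights of the tournament ratchet. -/
noncomputable def pAux (ρ : ℝ) : ℕ → ℝ × ℝ
  | 0 => (1 - ρ, 1 - ρ)
  | k+1 =>
    let a := ρ - 1 + 2 * (pAux ρ k).2
    let p := -(1/2) * a + Real.sqrt ((1/4) * a^2 + ρ * (pAux ρ k).1)
    (p, (pAux ρ k).2 + p)

/-- The equilibrium weight `p_k^{(ρ)}`. -/
noncomputable def pseq (ρ : ℝ) (k : ℕ) : ℝ := (pAux ρ k).1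

/-- `𝔰(k) = Σ_{j=0}^{k−1} 2^{−j} = 2(1 − 2^{−k})`, with `𝔰(0) = 0`. -/
noncomputable def sfrak (k : ℕ) : ℝ := ∑ j ∈ Finset.range k, ((2:ℝ)^j)⁻¹

/-! The weights obey `√(ρ p_k) - Σ_{ℓ≤k} p_ℓ ≤ p_{k+1} ≤ √(ρ p_k)`. The upper half gives
`ρ p_k ≤ θ_k := (ρ(1-ρ))^{1/2^k}`, and since `θ_k = θ_{k+1}²` with `θ_{k+1} ≤ ε`, the partial sums
are geometric: `Σ_{ℓ≤k} p_ℓ ≤ ε/(1-ε) · θ_{k+1}/ρ`, at most `3ε c θ_{k+1}` with `c = √ρ - 3ε`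
once `ρ` is close to `1` and `ε` is small. The lower half then propagates
`p_k ≥ c^{𝔰(k)} θ_k` through `√(ρ c^{𝔰(k)} θ_k) = √ρ c^{𝔰(k)/2} θ_{k+1}` and
`𝔰(k+1) = 1 + 𝔰(k)/2`. -/

lemma rpow_one_div_two_pow_succ_eq_sqrt {q : ℝ} (hq : 0 ≤ q) (k : ℕ) :
    q ^ (1 / (2:ℝ)^(k+1)) = √(q ^ (1 / (2:ℝ)^k)) := by
  rw [Real.sqrt_eq_rpow, ← Real.rpow_mul hq, pow_succ]
  congr 1
  field_simp

lemma rpow_one_div_two_pow_succ_sq {q : ℝ} (hq : 0 ≤ q) (k : ℕ) :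
    (q ^ (1 / (2:ℝ)^(k+1))) ^ 2 = q ^ (1 / (2:ℝ)^k) := by
  rw [rpow_one_div_two_pow_succ_eq_sqrt hq, Real.sq_sqrt (Real.rpow_nonneg hq _)]

lemma rpow_one_div_two_pow_le_of_le {q : ℝ} (hq0 : 0 ≤ q) (hq1 : q ≤ 1) {i j : ℕ} (hij : i ≤ j) :
    q ^ (1 / (2:ℝ)^i) ≤ q ^ (1 / (2:ℝ)^j) :=
  Real.rpow_le_rpow_of_exponent_ge' hq0 hq1 (by positivity) <|
    one_div_le_one_div_of_le (by positivity) (pow_le_pow_right₀ one_le_two hij)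

lemma neg_half_mul_add_sqrt_nonneg (a : ℝ) {x : ℝ} (hx : 0 ≤ x) :
    0 ≤ -(1/2) * a + √((1/4) * a^2 + x) := by
  have : |a / 2| ≤ √((1/4) * a^2 + x) := by
    rw [← Real.sqrt_sq_eq_abs]
    exact Real.sqrt_le_sqrt (by nlinarith)
  linarith [le_abs_self (a / 2)]

lemma neg_half_mul_add_sqrt_le_sqrt {a x : ℝ} (ha : 0 ≤ a) (hx : 0 ≤ x) :
    -(1/2) * a + √((1/4) * a^2 + x) ≤ √x := by
  have : √((1/4) * a^2 + x) ≤ a / 2 + √x := by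
    rw [Real.sqrt_le_left (by positivity)]
    nlinarith [Real.sq_sqrt hx, Real.sqrt_nonneg x]
  linarith

lemma sfrak_succ (k : ℕ) : sfrak (k+1) = 1 + sfrak k / 2 := by
  simp only [sfrak, Finset.sum_range_succ', pow_succ, mul_inv, ← Finset.sum_mul, pow_zero, inv_one]
  ring

lemma sfrak_le_two (k : ℕ) : sfrak k ≤ 2 := by
  induction k with
  | zero => simp [sfrak]
  | succ k ih => rw [sfrak_succ]; linarith

lemma pAux_snd_eq_sum (ρ : ℝ) (k : ℕ) : (pAux ρ k).2 = ∑ ℓ ∈ range (k+1), pseq ρ ℓ := by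
  induction k with
  | zero => simp [pAux, pseq]
  | succ k ih => rw [Finset.sum_range_succ, ← ih]; rfl

lemma pseq_zero (ρ : ℝ) : pseq ρ 0 = 1 - ρ := rfl

lemma pseq_succ (ρ : ℝ) (k : ℕ) :
    pseq ρ (k+1) = -(1/2) * (ρ - 1 + 2 * ∑ ℓ ∈ range (k+1), pseq ρ ℓ) +
      √((1/4) * (ρ - 1 + 2 * ∑ ℓ ∈ range (k+1), pseq ρ ℓ)^2 + ρ * pseq ρ k) := by
  rw [← pAux_snd_eq_sum]; rfl

section Recursion

variable {ρ : ℝ}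

lemma pseq_nonneg (hρ0 : 0 ≤ ρ) (hρ1 : ρ ≤ 1) (k : ℕ) : 0 ≤ pseq ρ k := by
  induction k with
  | zero => rw [pseq_zero]; linarith
  | succ k ih => rw [pseq_succ]; exact neg_half_mul_add_sqrt_nonneg _ (mul_nonneg hρ0 ih)

lemma pseq_succ_le_sqrt (hρ0 : 0 ≤ ρ) (hρ1 : ρ ≤ 1) (k : ℕ) :
    pseq ρ (k+1) ≤ √(ρ * pseq ρ k) := by
  have hsum : pseq ρ 0 ≤ ∑ ℓ ∈ range (k+1), pseq ρ ℓ :=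
    Finset.single_le_sum (fun ℓ _ ↦ pseq_nonneg hρ0 hρ1 ℓ) (by simp)
  rw [pseq_succ, pseq_zero] at *
  exact neg_half_mul_add_sqrt_le_sqrt (by linarith) (mul_nonneg hρ0 (pseq_nonneg hρ0 hρ1 k))

lemma sqrt_sub_sum_le_pseq_succ (hρ1 : ρ ≤ 1) (k : ℕ) :
    √(ρ * pseq ρ k) - ∑ ℓ ∈ range (k+1), pseq ρ ℓ ≤ pseq ρ (k+1) := by
  rw [pseq_succ]
  set S := ∑ ℓ ∈ range (k+1), pseq ρ ℓ
  have : √(ρ * pseq ρ k) ≤ √((1/4) * (ρ - 1 + 2 * S)^2 + ρ * pseq ρ k) :=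
    Real.sqrt_le_sqrt (le_add_of_nonneg_left (by positivity))
  linarith

lemma mul_pseq_le (hρ0 : 0 ≤ ρ) (hρ1 : ρ ≤ 1) (k : ℕ) :
    ρ * pseq ρ k ≤ (ρ * (1 - ρ)) ^ (1 / (2:ℝ)^k) := by
  have hq : 0 ≤ ρ * (1 - ρ) := mul_nonneg hρ0 (by linarith)
  induction k with
  | zero => simp [pseq_zero]
  | succ k ih =>
    calc ρ * pseq ρ (k+1) ≤ pseq ρ (k+1) :=
          mul_le_of_le_one_left (pseq_nonneg hρ0 hρ1 _) hρ1
      _ ≤ √(ρ * pseq ρ k) := pseq_succ_le_sqrt hρ0 hρ1 k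
      _ ≤ _ := by rw [rpow_one_div_two_pow_succ_eq_sqrt hq]; exact Real.sqrt_le_sqrt ih

lemma mul_one_sub_mul_sum_pseq_le (hρ0 : 0 ≤ ρ) (hρ1 : ρ ≤ 1) {ε : ℝ} (hε : ε < 1) {k : ℕ}
    (hθ : (ρ * (1 - ρ)) ^ (1 / (2:ℝ)^(k+1)) ≤ ε) :
    ρ * (1 - ε) * ∑ ℓ ∈ range (k+1), pseq ρ ℓ ≤ ε * (ρ * (1 - ρ)) ^ (1 / (2:ℝ)^(k+1)) := by
  have hq : 0 ≤ ρ * (1 - ρ) := mul_nonneg hρ0 (by linarith)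
  have hθ0 (j : ℕ) : 0 ≤ (ρ * (1 - ρ)) ^ (1 / (2:ℝ)^j) := Real.rpow_nonneg hq _
  induction k with
  | zero =>
    have h := mul_pseq_le hρ0 hρ1 0
    rw [← rpow_one_div_two_pow_succ_sq hq] at h
    have := pseq_nonneg hρ0 hρ1 0
    simp only [zero_add, Finset.sum_range_one] at hθ ⊢
    nlinarith [hθ0 1]
  | succ k ih =>
    -- `θ_{k+1} = θ_{k+2}² ≤ θ_{k+2}`, so both the hypothesis and the bound pass down one step.
    have hsq := rpow_one_div_two_pow_succ_sq hq (k+1)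
    have hθ' : (ρ * (1 - ρ)) ^ (1 / (2:ℝ)^(k+1)) ≤ ε := by nlinarith [hθ0 (k+2)]
    have h := mul_pseq_le hρ0 hρ1 (k+1)
    rw [Finset.sum_range_succ]
    nlinarith [ih hθ', hθ0 (k+2)]

end Recursion

theorem rpow_sfrak_mul_le_pseq {ρ ε : ℝ} (hρ0 : 0 < ρ) (hρ1 : ρ ≤ 1) (hε : ε < 1)
    (hc : 1 ≤ 3 * (√ρ - 3 * ε) * ρ * (1 - ε)) {K : ℕ}
    (hK : (ρ * (1 - ρ)) ^ (1 / (2:ℝ)^K) ≤ ε) {k : ℕ} (hk : k ≤ K) :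
    (√ρ - 3 * ε) ^ sfrak k * (ρ * (1 - ρ)) ^ (1 / (2:ℝ)^k) ≤ pseq ρ k := by
  have hq0 : 0 ≤ ρ * (1 - ρ) := mul_nonneg hρ0.le (by linarith)
  have hq1 : ρ * (1 - ρ) ≤ 1 := by nlinarith
  have hε0 : 0 ≤ ε := (Real.rpow_nonneg hq0 _).trans hK
  set c := √ρ - 3 * ε with hc_def
  have hc0 : 0 < c := by
    by_contra! h
    nlinarith [mul_pos hρ0 (sub_pos.2 hε)]
  have hc1 : c ≤ 1 := by have := Real.sqrt_le_one.2 hρ1; linarith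
  induction k with
  | zero =>
    simp only [sfrak, Finset.range_zero, Finset.sum_empty, Real.rpow_zero, one_mul, pow_zero,
      div_one, Real.rpow_one, pseq_zero]
    nlinarith
  | succ k ih =>
    set θ := (ρ * (1 - ρ)) ^ (1 / (2:ℝ)^(k+1))
    set X := c ^ (sfrak k / 2) * θ
    have hθ0 : 0 ≤ θ := Real.rpow_nonneg hq0 _
    have hθ : θ ≤ ε := (rpow_one_div_two_pow_le_of_le hq0 hq1 hk).trans hK
    have hcX : c ≤ c ^ (sfrak k / 2) := by
      simpa using Real.rpow_le_rpow_of_exponent_ge hc0 hc1 (show sfrak k / 2 ≤ 1 by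
        linarith [sfrak_le_two k])
    have hS : ∑ ℓ ∈ range (k+1), pseq ρ ℓ ≤ 3 * ε * X := by
      have hsum := mul_one_sub_mul_sum_pseq_le hρ0.le hρ1 hε hθ
      have hS0 : 0 ≤ ∑ ℓ ∈ range (k+1), pseq ρ ℓ :=
        Finset.sum_nonneg fun ℓ _ ↦ pseq_nonneg hρ0.le hρ1 ℓ
      nlinarith [mul_le_mul_of_nonneg_left hsum (by positivity : (0:ℝ) ≤ 3 * c),
        mul_le_mul_of_nonneg_right hcX (by positivity : 0 ≤ 3 * ε * θ)]
    have hsqrt : √ρ * X ≤ √(ρ * pseq ρ k) := by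
      calc √ρ * X = √(ρ * (c ^ sfrak k * (ρ * (1 - ρ)) ^ (1 / (2:ℝ)^k))) := by
            rw [Real.sqrt_mul hρ0.le, Real.sqrt_mul (Real.rpow_nonneg hc0.le _),
              ← rpow_one_div_two_pow_succ_eq_sqrt hq0, Real.sqrt_eq_rpow (c ^ sfrak k),
              ← Real.rpow_mul hc0.le, mul_one_div]
        _ ≤ √(ρ * pseq ρ k) := Real.sqrt_le_sqrt (mul_le_mul_of_nonneg_left (ih (Nat.le_of_succ_le hk)) hρ0.le)
    calc c ^ sfrak (k+1) * θ = √ρ * X - 3 * ε * X := by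
          rw [sfrak_succ, Real.rpow_add hc0, Real.rpow_one, hc_def]; ring
      _ ≤ √(ρ * pseq ρ k) - ∑ ℓ ∈ range (k+1), pseq ρ ℓ := by linarith
      _ ≤ pseq ρ (k+1) := sqrt_sub_sum_le_pseq_succ hρ1 k

theorem statement17_general (δ : ℝ) (hδ0 : 0 < δ) :
    ∃ ε₀ > (0:ℝ), ∀ ε : ℝ, 0 < ε → ε < ε₀ → ∃ N₀ : ℕ, ∀ N : ℕ, N₀ ≤ N →
      ∀ Kε : ℕ,
        ((1 - (N:ℝ)^(-δ)) * (N:ℝ)^(-δ)) ^ (1 / (2:ℝ)^Kε) ≤ ε →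
        ε ≤ ((1 - (N:ℝ)^(-δ)) * (N:ℝ)^(-δ)) ^ (1 / (2:ℝ)^(Kε+1)) →
        ∀ k : ℕ, k ≤ Kε →
          (Real.sqrt (1 - (N:ℝ)^(-δ)) *
              (1 - 3*ε / Real.sqrt (1 - (N:ℝ)^(-δ)))) ^ (sfrak k) *
            ((1 - (N:ℝ)^(-δ)) * (N:ℝ)^(-δ)) ^ (1 / (2:ℝ)^k)
            ≤ pseq (1 - (N:ℝ)^(-δ)) k := by
  refine ⟨1/10, by norm_num, fun ε hε0 hε1 ↦ ?_⟩
  obtain ⟨N₀, hN₀⟩ := eventually_atTop.mp <|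
    ((tendsto_rpow_neg_atTop hδ0).comp tendsto_natCast_atTop_atTop).eventually_lt_const
      (show (0:ℝ) < 1/10 by norm_num)
  refine ⟨N₀, fun N hN K hK _ k hk ↦ ?_⟩
  set r := (N:ℝ)^(-δ)
  have hr0 : 0 ≤ r := Real.rpow_nonneg (Nat.cast_nonneg N) _
  have hr1 : r < 1/10 := hN₀ N hN
  have hρ : 1 - r ≤ √(1 - r) := (Real.le_sqrt (by linarith) (by linarith)).2 (by nlinarith)
  have hbase : √(1 - r) * (1 - 3 * ε / √(1 - r)) = √(1 - r) - 3 * ε := by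
    field_simp [(show 0 < √(1 - r) by linarith).ne']
  have hc : 1 ≤ 3 * (√(1 - r) - 3 * ε) * (1 - r) * (1 - ε) := by
    nlinarith [mul_le_mul_of_nonneg_left (by nlinarith : (9:ℝ)/10 * (9/10) ≤ (1 - r) * (1 - ε))
      (by linarith : (0:ℝ) ≤ 3 * (√(1 - r) - 3 * ε))]
  rw [hbase]
  simpa only [sub_sub_cancel] using
    rpow_sfrak_mul_le_pseq (by linarith) (by linarith) (by linarith) hc
      (by rwa [sub_sub_cancel]) hk

/-- Lower bound for the equilibrium weights in the near-critical scaling: with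
`ρ = 1 − N^{−δ}` and `K_ε` defined by `(ρ(1−ρ))^{1/2^{K_ε}} ≤ ε ≤ (ρ(1−ρ))^{1/2^{K_ε+1}}`,
one has `p_k^{(N,δ)} ≥ (√ρ(1 − 3ε/√ρ))^{𝔰(k)} (ρ(1−ρ))^{1/2^k}` for all `k ≤ K_ε`. -/
theorem statement17 (δ : ℝ) (hδ0 : 0 < δ) (hδ1 : δ < 1) :
    ∃ ε₀ > (0:ℝ), ∀ ε : ℝ, 0 < ε → ε < ε₀ → ∃ N₀ : ℕ, ∀ N : ℕ, N₀ ≤ N →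
      ∀ Kε : ℕ,
        ((1 - (N:ℝ)^(-δ)) * (N:ℝ)^(-δ)) ^ (1 / (2:ℝ)^Kε) ≤ ε →
        ε ≤ ((1 - (N:ℝ)^(-δ)) * (N:ℝ)^(-δ)) ^ (1 / (2:ℝ)^(Kε+1)) →
        ∀ k : ℕ, k ≤ Kε →
          (Real.sqrt (1 - (N:ℝ)^(-δ)) *
              (1 - 3*ε / Real.sqrt (1 - (N:ℝ)^(-δ)))) ^ (sfrak k) *
            ((1 - (N:ℝ)^(-δ)) * (N:ℝ)^(-δ)) ^ (1 / (2:ℝ)^k)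
            ≤ pseq (1 - (N:ℝ)^(-δ)) k :=
  statement17_general δ hδ0
end MullerRatchet17
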